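/- Let n ≥ 1 and let ψ_0, …, ψ_{n-1} be real-valued functions in L²(ℝ) with ∫_ℝ ψ_l ψ_m dλ = δ_{lm}. Define p_n(λ_1, …, λ_n) = (det{ψ_{j-1}(λ_k)}_{j,k=1}^n)² / n! and K_n(λ, μ) = Σ_{l=0}^{n-1} ψ_l(λ) ψ_l(μ). Then for all bounded measurable φ_1, φ_2 : ℝ → ℝ, the covariance of the linear statistics N_n[φ_1] = Σ_{l=1}^n φ_1(λ_l) and N_n[φ_2] = Σ_{l=1}^n φ_2(λ_l) with respect to p_n equals (1/2) ∫_ℝ ∫_ℝ (φ_1(λ_1) - φ_1(λ_2)) (φ_2(λ_1) - φ_2(λ_2)) K_n(λ_1, λ_2)² dλ_1 dλ_2. -/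

import Mathlib

open MeasureTheory

/-- The determinantal density `p_n(λ) = (det{ψ_{j-1}(λ_k)}_{j,k=1}^n)²/n!` built from the
functions `ψ_0, …, ψ_{n-1}`. -/
noncomputable def detDensity (n : ℕ) (ψ : Fin n → ℝ → ℝ) (lam : Fin n → ℝ) : ℝ :=
  (Matrix.of fun j k : Fin n => ψ j (lam k)).det ^ 2 / (n.factorial : ℝ)

/-!
Writing `det²` as a double sum over permutations `σ` and `σπ` and integrating coordinatewise
(Andreief), the expectation of a product weight `∏ₖ wₖ(λₖ)` becomes a signed sum of products of
entries of the Gram matrices `G_w = (∫ w ψ_l ψ_m)_{l,m}`, and `G_1 = 1` by orthonormality. When all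
but one or two weights are `1`, only `π = 1` and the transposition of the two positions survive, so
`E N[f] = tr G_f` and `E ∑_{i ≠ j} f(λ_i) g(λ_j) = tr G_f tr G_g - tr (G_f G_g)`; hence the
covariance is `tr G_{φ₁φ₂} - tr (G_{φ₁} G_{φ₂})`. Expanding
`K_n(s,t)² = ∑_{l,m} ψ_l ψ_m (s) ψ_l ψ_m (t)` shows that the double integral is twice that.
-/

open Finset Equiv

section Permutations

variable {ι R : Type*} [DecidableEq ι]

theorem Equiv.Perm.eq_one_of_forall_ne_apply_eq [Fintype ι] {π : Perm ι} (i : ι)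
    (h : ∀ k, k ≠ i → π k = k) : π = 1 := by
  refine Perm.card_support_le_one.1 ((card_le_card fun k hk => ?_).trans (card_singleton i).le)
  exact mem_singleton.2 (by_contra fun hki => Perm.mem_support.1 hk (h k hki))

theorem Equiv.Perm.eq_one_or_eq_swap_of_forall_ne_ne_apply_eq {π : Perm ι} {i j : ι}
    (hij : i ≠ j) (h : ∀ k, k ≠ i → k ≠ j → π k = k) : π = 1 ∨ π = swap i j := by
  have hmem : ∀ k, k = i ∨ k = j → π k = i ∨ π k = j := fun k hk => by
    by_contra! hne
    have := π.injective (h _ hne.1 hne.2)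
    grind
  have hne : π i ≠ π j := π.injective.ne hij
  rcases hmem i (.inl rfl) with hi | hi
  · have hj : π j = j := (hmem j (.inr rfl)).resolve_left (hi ▸ hne.symm)
    refine .inl (Equiv.ext fun k => ?_)
    by_cases hki : k = i <;> by_cases hkj : k = j <;> simp_all
  · have hj : π j = i := (hmem j (.inr rfl)).resolve_right (hi ▸ hne.symm)
    refine .inr (Equiv.ext fun k => ?_)
    by_cases hki : k = i <;> by_cases hkj : k = j <;> simp_all [swap_apply_of_ne_of_ne]

variable [Fintype ι] [CommRing R]

theorem prod_apply_perm_apply_eq_zero {B : ι → Matrix ι ι R} {π : Perm ι} {k : ι}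
    (hk : B k = 1) (hπ : π k ≠ k) : ∏ k, B k k (π k) = 0 :=
  prod_eq_zero (mem_univ k) (by rw [hk, Matrix.one_apply_ne hπ.symm])

theorem sum_sign_mul_prod_eq_of_forall_ne_eq_one (B : ι → Matrix ι ι R) (i : ι)
    (hB : ∀ k, k ≠ i → B k = 1) :
    ∑ π : Perm ι, ((Perm.sign π : ℤ) : R) * ∏ k, B k k (π k) = B i i i := by
  rw [Fintype.sum_eq_single 1 fun π hπ => ?_]
  · simp only [Perm.sign_one, Units.val_one, Int.cast_one, one_mul, Perm.coe_one, id_eq]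
    exact Fintype.prod_eq_single i fun k hk => by simp [hB k hk]
  · obtain ⟨k, hki, hk⟩ : ∃ k, k ≠ i ∧ π k ≠ k := by
      by_contra! h
      exact hπ (Perm.eq_one_of_forall_ne_apply_eq i h)
    rw [prod_apply_perm_apply_eq_zero (hB k hki) hk, mul_zero]

theorem sum_sign_mul_prod_eq_of_forall_ne_ne_eq_one (B : ι → Matrix ι ι R) {i j : ι}
    (hij : i ≠ j) (hB : ∀ k, k ≠ i → k ≠ j → B k = 1) :
    ∑ π : Perm ι, ((Perm.sign π : ℤ) : R) * ∏ k, B k k (π k)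
      = B i i i * B j j j - B i i j * B j j i := by
  rw [Fintype.sum_eq_add 1 (swap i j) (fun h => hij (swap_eq_one_iff.1 h.symm)) fun π hπ => ?_]
  · have hrest : ∀ k, k ≠ i ∧ k ≠ j → B k k k = 1 := fun k hk => by simp [hB k hk.1 hk.2]
    have hrest' : ∀ k, k ≠ i ∧ k ≠ j → B k k (swap i j k) = 1 := fun k hk => by
      simp [hB k hk.1 hk.2, swap_apply_of_ne_of_ne hk.1 hk.2]
    simp only [Perm.sign_one, Units.val_one, Int.cast_one, one_mul, Perm.coe_one, id_eq]
    rw [Fintype.prod_eq_mul i j hij hrest, Fintype.prod_eq_mul i j hij hrest',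
      Perm.sign_swap hij, swap_apply_left, swap_apply_right]
    push_cast
    ring
  · obtain ⟨k, hki, hkj, hk⟩ : ∃ k, k ≠ i ∧ k ≠ j ∧ π k ≠ k := by
      by_contra! h
      exact (Perm.eq_one_or_eq_swap_of_forall_ne_ne_apply_eq hij h).elim hπ.1 hπ.2
    rw [prod_apply_perm_apply_eq_zero (hB k hki hkj) hk, mul_zero]

theorem Matrix.det_sq_eq_sum_sum_sign_mul_prod (M : Matrix ι ι R) :
    M.det ^ 2 = ∑ σ : Perm ι, ∑ π : Perm ι,
      ((Perm.sign π : ℤ) : R) * ∏ k, M (σ k) k * M (σ (π k)) k := by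
  rw [det_apply', sq, sum_mul_sum]
  refine sum_congr rfl fun σ _ => ?_
  rw [← Equiv.sum_comp (Equiv.mulLeft σ)]
  refine sum_congr rfl fun π _ => ?_
  have hsign : ((Perm.sign σ : ℤ) : R) * ((Perm.sign σ : ℤ) : R) = 1 := by
    rw [← Int.cast_mul, Int.units_coe_mul_self, Int.cast_one]
  simp only [coe_mulLeft, Perm.sign_mul, Units.val_mul, Int.cast_mul, Perm.coe_mul,
    Function.comp_apply, prod_mul_distrib]
  linear_combination (∏ k, M (σ k) k) * (∏ k, M (σ (π k)) k) * ((Perm.sign π : ℤ) : R) * hsign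

end Permutations

theorem Fintype.sum_sum_eq_sum_add_sum_offDiag {ι M : Type*} [Fintype ι] [DecidableEq ι]
    [AddCommMonoid M] (F : ι → ι → M) :
    ∑ i, ∑ j, F i j = ∑ i, F i i + ∑ p ∈ univ.offDiag, F p.1 p.2 := by
  rw [← sum_product' (f := F), ← diag_union_offDiag,
    sum_union (disjoint_diag_offDiag _), sum_diag]

theorem integral_integral_sum_mul {κ α β : Type*} [Fintype κ] [MeasurableSpace α]
    [MeasurableSpace β] {μ : Measure α} {ν : Measure β} (a : κ → α → ℝ) (b : κ → β → ℝ)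
    (ha : ∀ r, Integrable (a r) μ) (hb : ∀ r, Integrable (b r) ν) :
    ∫ x, ∫ y, ∑ r, a r x * b r y ∂ν ∂μ = ∑ r, (∫ x, a r x ∂μ) * ∫ y, b r y ∂ν := by
  calc ∫ x, ∫ y, ∑ r, a r x * b r y ∂ν ∂μ = ∫ x, ∑ r, a r x * ∫ y, b r y ∂ν ∂μ := by
        congr 1 with x
        rw [integral_finsetSum _ fun r _ => (hb r).const_mul _]
        simp_rw [integral_const_mul]
    _ = _ := by
        rw [integral_finsetSum _ fun r _ => (ha r).mul_const _]
        simp_rw [integral_mul_const]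

variable {n : ℕ} {ψ : Fin n → ℝ → ℝ}

noncomputable def weightedGram (ψ : Fin n → ℝ → ℝ) (f : ℝ → ℝ) : Matrix (Fin n) (Fin n) ℝ :=
  Matrix.of fun l m => ∫ t, f t * (ψ l t * ψ m t)

theorem weightedGram_one
    (horth : ∀ l m, (∫ t : ℝ, ψ l t * ψ m t) = if l = m then (1 : ℝ) else 0) :
    weightedGram ψ 1 = 1 := by
  ext l m
  simp [weightedGram, horth, Matrix.one_apply]

theorem weightedGram_neg (f : ℝ → ℝ) : weightedGram ψ (-f) = -weightedGram ψ f := by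
  ext l m
  simp [weightedGram, integral_neg]

theorem weightedGram_isSymm (f : ℝ → ℝ) : (weightedGram ψ f).IsSymm := by
  ext l m
  simp [weightedGram, mul_comm (ψ l _)]

theorem prod_mul_detDensity (w : Fin n → ℝ → ℝ) (lam : Fin n → ℝ) :
    (∏ k, w k (lam k)) * detDensity n ψ lam
      = (n.factorial : ℝ)⁻¹ * ∑ σ : Perm (Fin n), ∑ π : Perm (Fin n), ((Perm.sign π : ℤ) : ℝ) *
          ∏ k, w k (lam k) * (ψ (σ k) (lam k) * ψ (σ (π k)) (lam k)) := by
  rw [detDensity, Matrix.det_sq_eq_sum_sum_sign_mul_prod, div_eq_inv_mul, mul_left_comm,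
    mul_sum]
  congr 1
  refine sum_congr rfl fun σ _ => ?_
  rw [mul_sum]
  refine sum_congr rfl fun π _ => ?_
  simp only [Matrix.of_apply, prod_mul_distrib]
  ring

variable {w : Fin n → ℝ → ℝ}

theorem integrable_prod_mul_detDensity
    (hw : ∀ k l m, Integrable fun t => w k t * (ψ l t * ψ m t)) :
    Integrable fun lam => (∏ k, w k (lam k)) * detDensity n ψ lam := by
  simp_rw [prod_mul_detDensity]
  refine (integrable_finsetSum _ fun σ _ => integrable_finsetSum _ fun π _ => ?_).const_mul _
  exact (Integrable.fintype_prod (f := fun k t => w k t * (ψ (σ k) t * ψ (σ (π k)) t))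
    fun k => hw k _ _).const_mul _

theorem integral_prod_mul_detDensity
    (hw : ∀ k l m, Integrable fun t => w k t * (ψ l t * ψ m t)) :
    ∫ lam, (∏ k, w k (lam k)) * detDensity n ψ lam
      = (n.factorial : ℝ)⁻¹ * ∑ σ : Perm (Fin n), ∑ π : Perm (Fin n), ((Perm.sign π : ℤ) : ℝ) *
          ∏ k, weightedGram ψ (w k) (σ k) (σ (π k)) := by
  have hint : ∀ σ π : Perm (Fin n), Integrable fun lam : Fin n → ℝ =>
      ∏ k, w k (lam k) * (ψ (σ k) (lam k) * ψ (σ (π k)) (lam k)) := fun σ π =>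
    Integrable.fintype_prod (f := fun k t => w k t * (ψ (σ k) t * ψ (σ (π k)) t))
      fun k => hw k _ _
  simp_rw [prod_mul_detDensity]
  rw [integral_const_mul, integral_finsetSum _ fun σ _ =>
    integrable_finsetSum _ fun π _ => (hint σ π).const_mul _]
  congr 1
  refine sum_congr rfl fun σ _ => ?_
  rw [integral_finsetSum _ fun π _ => (hint σ π).const_mul _]
  refine sum_congr rfl fun π _ => ?_
  rw [integral_const_mul, integral_fintype_prod_volume_eq_prod
    (fun k t => w k t * (ψ (σ k) t * ψ (σ (π k)) t))]
  rfl

theorem prod_mulSingle_apply (i : Fin n) (f : ℝ → ℝ) (lam : Fin n → ℝ) :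
    ∏ k, (Pi.mulSingle i f : Fin n → ℝ → ℝ) k (lam k) = f (lam i) := by
  rw [Fintype.prod_eq_single i fun k hk => by simp [Pi.mulSingle_eq_of_ne hk],
    Pi.mulSingle_eq_same]

theorem prod_mulSingle_mul_mulSingle_apply (i j : Fin n) (f g : ℝ → ℝ) (lam : Fin n → ℝ) :
    ∏ k, (Pi.mulSingle i f * Pi.mulSingle j g : Fin n → ℝ → ℝ) k (lam k)
      = f (lam i) * g (lam j) := by
  simp only [Pi.mul_apply, prod_mul_distrib, prod_mulSingle_apply]

section Correlations

variable (horth : ∀ l m, (∫ t : ℝ, ψ l t * ψ m t) = if l = m then (1 : ℝ) else 0)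
  (hψ : ∀ l m, Integrable fun t => ψ l t * ψ m t) {f g : ℝ → ℝ}
  (hf : ∀ l m, Integrable fun t => f t * (ψ l t * ψ m t))
  (hg : ∀ l m, Integrable fun t => g t * (ψ l t * ψ m t))

include hψ hf in
theorem integrable_mulSingle_mul (i : Fin n) (k l m : Fin n) :
    Integrable fun t => (Pi.mulSingle i f : Fin n → ℝ → ℝ) k t * (ψ l t * ψ m t) := by
  rcases eq_or_ne k i with rfl | hk
  · simpa using hf l m
  · simpa [Pi.mulSingle_eq_of_ne hk] using hψ l m

include hψ hf in
theorem integrable_apply_mul_detDensity (i : Fin n) :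
    Integrable fun lam => f (lam i) * detDensity n ψ lam := by
  simpa only [prod_mulSingle_apply] using
    integrable_prod_mul_detDensity (integrable_mulSingle_mul hψ hf i)

include horth hψ hf in
theorem integral_apply_mul_detDensity (i : Fin n) :
    ∫ lam, f (lam i) * detDensity n ψ lam
      = (n.factorial : ℝ)⁻¹ * ∑ σ : Perm (Fin n), weightedGram ψ f (σ i) (σ i) := by
  have h := integral_prod_mul_detDensity (integrable_mulSingle_mul hψ hf i)
  simp only [prod_mulSingle_apply] at h
  rw [h]
  congr 1
  refine sum_congr rfl fun σ _ => ?_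
  have hone : ∀ k, k ≠ i →
      (weightedGram ψ ((Pi.mulSingle i f : Fin n → ℝ → ℝ) k)).submatrix σ σ = 1 :=
    fun k hk => by simp [Pi.mulSingle_eq_of_ne hk, weightedGram_one horth]
  simpa using sum_sign_mul_prod_eq_of_forall_ne_eq_one _ i hone

include hψ hf in
theorem integrable_sum_apply_mul_detDensity :
    Integrable fun lam => (∑ i, f (lam i)) * detDensity n ψ lam := by
  simp_rw [sum_mul]
  exact integrable_finsetSum _ fun i _ => integrable_apply_mul_detDensity hψ hf i

include horth hψ hf in
theorem integral_sum_apply_mul_detDensity :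
    ∫ lam, (∑ i, f (lam i)) * detDensity n ψ lam = (weightedGram ψ f).trace := by
  simp_rw [sum_mul]
  rw [integral_finsetSum _ fun i _ => integrable_apply_mul_detDensity hψ hf i]
  simp_rw [integral_apply_mul_detDensity horth hψ hf, ← mul_sum]
  rw [sum_comm]
  have htrace : ∀ σ : Perm (Fin n), ∑ i, weightedGram ψ f (σ i) (σ i) = (weightedGram ψ f).trace :=
    fun σ => Equiv.sum_comp σ fun l => weightedGram ψ f l l
  simp only [htrace, sum_const, card_univ, Fintype.card_perm, Fintype.card_fin, nsmul_eq_mul]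
  field_simp

variable {i j : Fin n}

include hψ hf hg in
theorem integrable_mulSingle_mul_mulSingle_mul (hij : i ≠ j) (k l m : Fin n) :
    Integrable fun t => (Pi.mulSingle i f * Pi.mulSingle j g : Fin n → ℝ → ℝ) k t *
      (ψ l t * ψ m t) := by
  rcases eq_or_ne k i with rfl | hki
  · simpa [Pi.mulSingle_eq_of_ne hij] using hf l m
  rcases eq_or_ne k j with rfl | hkj
  · simpa [Pi.mulSingle_eq_of_ne hki] using hg l m
  · simpa [Pi.mulSingle_eq_of_ne hki, Pi.mulSingle_eq_of_ne hkj] using hψ l m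

include hψ hf hg in
theorem integrable_apply_mul_apply_mul_detDensity (hij : i ≠ j) :
    Integrable fun lam => f (lam i) * g (lam j) * detDensity n ψ lam := by
  simpa only [prod_mulSingle_mul_mulSingle_apply] using
    integrable_prod_mul_detDensity (integrable_mulSingle_mul_mulSingle_mul hψ hf hg hij)

include horth hψ hf hg in
theorem integral_apply_mul_apply_mul_detDensity (hij : i ≠ j) :
    ∫ lam, f (lam i) * g (lam j) * detDensity n ψ lam
      = (n.factorial : ℝ)⁻¹ * ∑ σ : Perm (Fin n),
          (weightedGram ψ f (σ i) (σ i) * weightedGram ψ g (σ j) (σ j)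
            - weightedGram ψ f (σ i) (σ j) * weightedGram ψ g (σ j) (σ i)) := by
  have h := integral_prod_mul_detDensity (integrable_mulSingle_mul_mulSingle_mul hψ hf hg hij)
  simp only [prod_mulSingle_mul_mulSingle_apply] at h
  rw [h]
  congr 1
  refine sum_congr rfl fun σ _ => ?_
  have hone : ∀ k, k ≠ i → k ≠ j → (weightedGram ψ
      ((Pi.mulSingle i f * Pi.mulSingle j g : Fin n → ℝ → ℝ) k)).submatrix σ σ = 1 :=
    fun k hki hkj => by
      simp [Pi.mulSingle_eq_of_ne hki, Pi.mulSingle_eq_of_ne hkj, weightedGram_one horth]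
  simpa [Pi.mulSingle_eq_of_ne hij, Pi.mulSingle_eq_of_ne hij.symm] using
    sum_sign_mul_prod_eq_of_forall_ne_ne_eq_one _ hij hone

include hψ hf hg in
theorem integrable_sum_offDiag_mul_detDensity :
    Integrable fun lam => (∑ p ∈ univ.offDiag, f (lam p.1) * g (lam p.2)) * detDensity n ψ lam := by
  simp_rw [sum_mul]
  exact integrable_finsetSum _ fun p hp =>
    integrable_apply_mul_apply_mul_detDensity hψ hf hg (mem_offDiag.1 hp).2.2

include horth hψ hf hg in
theorem integral_sum_offDiag_mul_detDensity :
    ∫ lam, (∑ p ∈ univ.offDiag, f (lam p.1) * g (lam p.2)) * detDensity n ψ lam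
      = (weightedGram ψ f).trace * (weightedGram ψ g).trace
        - (weightedGram ψ f * weightedGram ψ g).trace := by
  set A := weightedGram ψ f
  set B := weightedGram ψ g
  simp_rw [sum_mul]
  rw [integral_finsetSum _ fun p hp =>
    integrable_apply_mul_apply_mul_detDensity hψ hf hg (mem_offDiag.1 hp).2.2,
    sum_congr rfl fun p hp =>
      integral_apply_mul_apply_mul_detDensity horth hψ hf hg (mem_offDiag.1 hp).2.2,
    ← mul_sum, sum_comm]
  have hσ : ∀ σ : Perm (Fin n), ∑ p ∈ univ.offDiag,
      (A (σ p.1) (σ p.1) * B (σ p.2) (σ p.2) - A (σ p.1) (σ p.2) * B (σ p.2) (σ p.1))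
        = A.trace * B.trace - (A * B).trace := by
    intro σ
    have h := Fintype.sum_sum_eq_sum_add_sum_offDiag
      fun i j => A (σ i) (σ i) * B (σ j) (σ j) - A (σ i) (σ j) * B (σ j) (σ i)
    simp only [sub_self, sum_const_zero, zero_add] at h
    rw [← h, Equiv.sum_comp σ fun l => ∑ j, (A l l * B (σ j) (σ j) - A l (σ j) * B (σ j) l)]
    simp only [fun l => Equiv.sum_comp σ fun m => A l l * B m m - A l m * B m l]
    simp [Matrix.trace, Matrix.mul_apply, sum_mul_sum]
  rw [sum_congr rfl fun σ _ => hσ σ]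
  simp only [sum_const, card_univ, Fintype.card_perm, Fintype.card_fin, nsmul_eq_mul]
  field_simp

end Correlations

theorem integral_integral_sum_mul_mul_kernel_sq {κ : Type*} [Fintype κ] (u v : κ → ℝ → ℝ)
    (hu : ∀ q l m, Integrable fun t => u q t * (ψ l t * ψ m t))
    (hv : ∀ q l m, Integrable fun t => v q t * (ψ l t * ψ m t)) :
    ∫ s, ∫ t, (∑ q, u q s * v q t) * (∑ l, ψ l s * ψ l t) ^ 2
      = ∑ q, (weightedGram ψ (u q) * weightedGram ψ (v q)).trace := by
  have hsplit : ∀ s t, (∑ q, u q s * v q t) * (∑ l, ψ l s * ψ l t) ^ 2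
      = ∑ x : κ × Fin n × Fin n, (u x.1 s * (ψ x.2.1 s * ψ x.2.2 s)) *
          (v x.1 t * (ψ x.2.1 t * ψ x.2.2 t)) := by
    intro s t
    rw [sq, Fintype.sum_mul_sum, sum_mul]
    simp only [Fintype.sum_prod_type, mul_sum]
    refine sum_congr rfl fun q _ => sum_congr rfl fun l _ => sum_congr rfl fun m _ => ?_
    ring
  simp_rw [hsplit]
  rw [integral_integral_sum_mul _ _ (fun x => hu _ _ _) fun x => hv _ _ _]
  simp only [Fintype.sum_prod_type, Matrix.trace, Matrix.diag_apply, Matrix.mul_apply,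
    (weightedGram_isSymm _).apply]
  rfl

theorem integral_integral_sub_mul_sub_mul_kernel_sq
    (horth : ∀ l m, (∫ t : ℝ, ψ l t * ψ m t) = if l = m then (1 : ℝ) else 0)
    (hψ : ∀ l m, Integrable fun t => ψ l t * ψ m t) {f g : ℝ → ℝ}
    (hf : ∀ l m, Integrable fun t => f t * (ψ l t * ψ m t))
    (hg : ∀ l m, Integrable fun t => g t * (ψ l t * ψ m t))
    (hfg : ∀ l m, Integrable fun t => f t * g t * (ψ l t * ψ m t)) :
    ∫ s, ∫ t, (f s - f t) * (g s - g t) * (∑ l, ψ l s * ψ l t) ^ 2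
      = 2 * ((weightedGram ψ (f * g)).trace - (weightedGram ψ f * weightedGram ψ g).trace) := by
  let u : Fin 4 → ℝ → ℝ := ![f * g, f, g, 1]
  let v : Fin 4 → ℝ → ℝ := ![1, -g, -f, f * g]
  have hu : ∀ q l m, Integrable fun t => u q t * (ψ l t * ψ m t) := by
    intro q l m
    fin_cases q <;> simp [u, hfg, hf, hg, hψ]
  have hv : ∀ q l m, Integrable fun t => v q t * (ψ l t * ψ m t) := by
    intro q l m
    fin_cases q <;> simp [v, hfg, hf, hg, hψ]
  have hprod : ∀ s t, (f s - f t) * (g s - g t) = ∑ q, u q s * v q t := by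
    intro s t
    simp [u, v, Fin.sum_univ_four]
    ring
  simp_rw [hprod]
  rw [integral_integral_sum_mul_mul_kernel_sq u v hu hv, Fin.sum_univ_four]
  simp [u, v, weightedGram_one horth, weightedGram_neg, Matrix.trace_mul_comm (weightedGram ψ g)]
  ring

theorem covariance_linear_statistics_detDensity_general (n : ℕ)
    (ψ : Fin n → ℝ → ℝ)
    (hL2 : ∀ l, MemLp (ψ l) 2 (volume : Measure ℝ))
    (horth : ∀ l m, (∫ t : ℝ, ψ l t * ψ m t) = if l = m then (1 : ℝ) else 0)
    (φ₁ φ₂ : ℝ → ℝ) (hφ₁m : Measurable φ₁) (hφ₁b : ∃ C : ℝ, ∀ t, |φ₁ t| ≤ C)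
    (hφ₂m : Measurable φ₂) (hφ₂b : ∃ C : ℝ, ∀ t, |φ₂ t| ≤ C) :
    (∫ lam : Fin n → ℝ,
        ((∑ l, φ₁ (lam l)) * (∑ l, φ₂ (lam l))) * detDensity n ψ lam) -
        (∫ lam : Fin n → ℝ, (∑ l, φ₁ (lam l)) * detDensity n ψ lam) *
          (∫ lam : Fin n → ℝ, (∑ l, φ₂ (lam l)) * detDensity n ψ lam) =
      (1 / 2) * ∫ t₁ : ℝ, ∫ t₂ : ℝ,
        (φ₁ t₁ - φ₁ t₂) * (φ₂ t₁ - φ₂ t₂) * (∑ l, ψ l t₁ * ψ l t₂) ^ 2 := by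
  have hψ : ∀ l m, Integrable fun t => ψ l t * ψ m t := fun l m => (hL2 l).integrable_mul (hL2 m)
  have hbdd : ∀ {f g : ℝ → ℝ}, Measurable f → (∃ C : ℝ, ∀ t, |f t| ≤ C) → Integrable g →
      Integrable fun t => f t * g t := fun hf ⟨C, hC⟩ hg =>
    hg.bdd_mul hf.aestronglyMeasurable (c := C) (ae_of_all _ hC)
  have h₁ : ∀ l m, Integrable fun t => φ₁ t * (ψ l t * ψ m t) :=
    fun l m => hbdd hφ₁m hφ₁b (hψ l m)
  have h₂ : ∀ l m, Integrable fun t => φ₂ t * (ψ l t * ψ m t) :=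
    fun l m => hbdd hφ₂m hφ₂b (hψ l m)
  have h₁₂ : ∀ l m, Integrable fun t => φ₁ t * φ₂ t * (ψ l t * ψ m t) :=
    fun l m => by simpa only [mul_assoc] using hbdd hφ₁m hφ₁b (h₂ l m)
  have hsplit : ∀ lam : Fin n → ℝ, (∑ l, φ₁ (lam l)) * (∑ l, φ₂ (lam l)) * detDensity n ψ lam
      = (∑ i, (φ₁ * φ₂) (lam i)) * detDensity n ψ lam
        + (∑ p ∈ univ.offDiag, φ₁ (lam p.1) * φ₂ (lam p.2)) * detDensity n ψ lam := by
    intro lam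
    rw [Fintype.sum_mul_sum, Fintype.sum_sum_eq_sum_add_sum_offDiag, add_mul]
    rfl
  simp_rw [hsplit]
  rw [integral_add (integrable_sum_apply_mul_detDensity (f := φ₁ * φ₂) hψ h₁₂)
      (integrable_sum_offDiag_mul_detDensity hψ h₁ h₂),
    integral_sum_apply_mul_detDensity (f := φ₁ * φ₂) horth hψ h₁₂,
    integral_sum_offDiag_mul_detDensity horth hψ h₁ h₂,
    integral_sum_apply_mul_detDensity horth hψ h₁, integral_sum_apply_mul_detDensity horth hψ h₂,
    integral_integral_sub_mul_sub_mul_kernel_sq horth hψ h₁ h₂ h₁₂]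
  ring

/-- For orthonormal `ψ_0, …, ψ_{n-1}` in `L²(ℝ)` and bounded measurable `φ₁, φ₂`, the
covariance of the linear statistics `Σ_l φ₁(λ_l)` and `Σ_l φ₂(λ_l)` with respect to the
determinantal density `p_n` equals
`(1/2) ∬ (φ₁(λ₁)-φ₁(λ₂))(φ₂(λ₁)-φ₂(λ₂)) K_n(λ₁,λ₂)² dλ₁ dλ₂`. -/
theorem covariance_linear_statistics_detDensity (n : ℕ) (hn : 1 ≤ n)
    (ψ : Fin n → ℝ → ℝ) (hmeas : ∀ l, Measurable (ψ l))
    (hL2 : ∀ l, MemLp (ψ l) 2 (volume : Measure ℝ))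
    (horth : ∀ l m, (∫ t : ℝ, ψ l t * ψ m t) = if l = m then (1 : ℝ) else 0)
    (φ₁ φ₂ : ℝ → ℝ) (hφ₁m : Measurable φ₁) (hφ₁b : ∃ C : ℝ, ∀ t, |φ₁ t| ≤ C)
    (hφ₂m : Measurable φ₂) (hφ₂b : ∃ C : ℝ, ∀ t, |φ₂ t| ≤ C) :
    (∫ lam : Fin n → ℝ,
        ((∑ l, φ₁ (lam l)) * (∑ l, φ₂ (lam l))) * detDensity n ψ lam) -
        (∫ lam : Fin n → ℝ, (∑ l, φ₁ (lam l)) * detDensity n ψ lam) *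
          (∫ lam : Fin n → ℝ, (∑ l, φ₂ (lam l)) * detDensity n ψ lam) =
      (1 / 2) * ∫ t₁ : ℝ, ∫ t₂ : ℝ,
        (φ₁ t₁ - φ₁ t₂) * (φ₂ t₁ - φ₂ t₂) * (∑ l, ψ l t₁ * ψ l t₂) ^ 2 :=
  covariance_linear_statistics_detDensity_general n ψ hL2 horth φ₁ φ₂ hφ₁m hφ₁b hφ₂m hφ₂b
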